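/- Every finitely generated group of subexponential growth is amenable. -/

import Mathlib

/-!
If the balls `B t` grow subexponentially, the ratios `|B (t + 1)| / |B t|` cannot stay above any
fixed `c > 1`, so along some subsequence `t = φ n` they tend to `1`. For a generator `s`, both
`s • B t \ B t` and `B t \ s • B t` lie in a translate of the sphere `B (t + 1) \ B t`, so the balls
`B (φ n)` form a Følner sequence for the counting measure: first for the generators, then for all
of `G`, because the elements along which a sequence is Følner form a subgroup. A Følner sequence
yields an invariant mean as a limit of densities along an ultrafilter (`IsFoelner.amenable`).
-/

open Filter Real Topology

/-- The ball of radius `t` in the word metric on `G` associated with the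
(symmetrized) generating set `S`. -/
def wordBall {G : Type*} [Group G] (S : Set G) (t : ℕ) : Set G :=
  {g | ∃ l : List G, (∀ x ∈ l, x ∈ S ∨ x⁻¹ ∈ S) ∧ l.length ≤ t ∧ l.prod = g}

open MeasureTheory Set
open scoped Pointwise symmDiff ENNReal

theorem frequently_sub_lt_of_tendsto_div_atTop {a : ℕ → ℝ} {L δ : ℝ}
    (ha : Tendsto (fun t : ℕ => a t / t) atTop (𝓝 L)) (hδ : L < δ) :
    ∃ᶠ t in atTop, a (t + 1) - a t < δ := by
  by_contra h
  obtain ⟨N, hN⟩ := eventually_atTop.1 (not_frequently.1 h)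
  set C := a N - N * δ
  have hlin : ∀ t ≥ N, C + t * δ ≤ a t := by
    intro t ht
    induction t, ht using Nat.le_induction with
    | base => simp [C]
    | succ t ht ih => push_cast; linarith [not_lt.1 (hN t ht)]
  have hlim : Tendsto (fun t : ℕ => C / t + δ) atTop (𝓝 δ) := by
    simpa using (tendsto_const_div_atTop_nhds_zero_nat C).add_const δ
  have hle : ∀ᶠ t : ℕ in atTop, C / t + δ ≤ a t / t := by
    filter_upwards [eventually_ge_atTop N, eventually_gt_atTop 0] with t hN ht
    have ht : (0 : ℝ) < t := by exact_mod_cast ht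
    rw [div_add' _ _ _ ht.ne', div_le_div_iff_of_pos_right ht]
    linarith [hlin t hN]
  linarith [le_of_tendsto_of_tendsto hlim ha hle]

theorem exists_tendsto_sub_nhds_zero_of_tendsto_div_atTop {a : ℕ → ℝ} (hmono : Monotone a)
    (ha : Tendsto (fun t : ℕ => a t / t) atTop (𝓝 0)) :
    ∃ φ : ℕ → ℕ, Tendsto (fun n => a (φ n + 1) - a (φ n)) atTop (𝓝 0) := by
  obtain ⟨φ, -, hφ⟩ := extraction_forall_of_frequently fun n : ℕ =>
    frequently_sub_lt_of_tendsto_div_atTop ha (Nat.one_div_pos_of_nat (n := n))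
  exact ⟨φ, squeeze_zero (fun n => sub_nonneg.2 (hmono (φ n).le_succ))
    (fun n => (hφ n).le) tendsto_one_div_add_atTop_nhds_zero_nat⟩

theorem exists_tendsto_sub_div_self_of_tendsto_log_div_atTop {b : ℕ → ℝ} (hpos : ∀ t, 0 < b t)
    (hmono : Monotone b) (hb : Tendsto (fun t : ℕ => log (b t) / t) atTop (𝓝 0)) :
    ∃ φ : ℕ → ℕ, Tendsto (fun n => (b (φ n + 1) - b (φ n)) / b (φ n)) atTop (𝓝 0) := by
  obtain ⟨φ, hφ⟩ := exists_tendsto_sub_nhds_zero_of_tendsto_div_atTop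
    (fun s t hst => log_le_log (hpos s) (hmono hst)) hb
  refine ⟨φ, ?_⟩
  have hexp : Tendsto (fun x => exp x - 1) (𝓝 0) (𝓝 0) := by
    simpa using (continuous_exp.tendsto 0).sub_const 1
  refine (hexp.comp hφ).congr fun n => ?_
  simp only [Function.comp_apply, exp_sub, exp_log (hpos _)]
  field_simp [(hpos (φ n)).ne']

theorem Set.Finite.toReal_count {α : Type*} [MeasurableSpace α] [MeasurableSingletonClass α]
    {s : Set α} (hs : s.Finite) : (Measure.count s).toReal = s.ncard := by
  rw [Measure.count_apply_finite _ hs, ← ncard_eq_toFinset_card s hs, ENNReal.toReal_natCast]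

theorem exists_tendsto_count_sdiff_div_of_tendsto_log_ncard_div {α : Type*} [MeasurableSpace α]
    [MeasurableSingletonClass α] {B : ℕ → Set α} (hmono : Monotone B)
    (hfin : ∀ t, (B t).Finite) (hne : ∀ t, (B t).Nonempty)
    (hB : Tendsto (fun t : ℕ => log (B t).ncard / t) atTop (𝓝 0)) :
    ∃ φ : ℕ → ℕ, Tendsto (fun n => Measure.count (B (φ n + 1) \ B (φ n)) /
      Measure.count (B (φ n))) atTop (𝓝 0) := by
  obtain ⟨φ, hφ⟩ := exists_tendsto_sub_div_self_of_tendsto_log_div_atTop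
    (fun t => Nat.cast_pos.2 ((ncard_pos (hfin t)).2 (hne t)))
    (fun s t hst => Nat.cast_le.2 (ncard_le_ncard (hmono hst) (hfin t))) hB
  have hne_top : ∀ n, Measure.count (B (φ n + 1) \ B (φ n)) / Measure.count (B (φ n)) ≠ ∞ :=
    fun n => ENNReal.div_ne_top (Measure.count_apply_lt_top.2 (hfin _).sdiff).ne
      (Measure.count_ne_zero_iff.2 (hne _))
  refine ⟨φ, (ENNReal.tendsto_toReal_iff hne_top ENNReal.zero_ne_top).1 ?_⟩
  simpa [ENNReal.toReal_div, (hfin _).sdiff.toReal_count, (hfin _).toReal_count,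
    ncard_sdiff (hmono (φ _).le_succ) (hfin _),
    Nat.cast_sub (ncard_le_ncard (hmono (φ _).le_succ) (hfin _))] using hφ

namespace MeasureTheory.IsFoelner

variable {G X ι : Type*} [Group G] [MulAction G X] [MeasurableSpace X] {μ : Measure X}
  [SMulInvariantMeasure G X μ] {l : Filter ι} {F : ι → Set X}

theorem of_closure_eq_top {T : Set G} (hT : Subgroup.closure T = ⊤)
    (hmeas : ∀ᶠ i in l, MeasurableSet (F i)) (hne_zero : ∀ᶠ i in l, μ (F i) ≠ 0)
    (hne_top : ∀ᶠ i in l, μ (F i) ≠ ∞)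
    (hgen : ∀ g ∈ T, Tendsto (fun i => μ ((g • F i) ∆ F i) / μ (F i)) l (𝓝 0)) :
    IsFoelner G μ l F := by
  let H : Subgroup G :=
    { carrier := {g | Tendsto (fun i => μ ((g • F i) ∆ F i) / μ (F i)) l (𝓝 0)}
      one_mem' := by simp [tendsto_const_nhds]
      mul_mem' := fun {g h} hg hh => by
        refine tendsto_of_tendsto_of_tendsto_of_le_of_le tendsto_const_nhds
          (by simpa using hh.add hg) (fun _ => zero_le) fun i => ?_
        rw [← ENNReal.add_div]
        gcongr
        calc μ (((g * h) • F i) ∆ F i)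
            ≤ μ (((g * h) • F i) ∆ (g • F i)) + μ ((g • F i) ∆ F i) := measure_symmDiff_le _ _ _
          _ = μ ((h • F i) ∆ F i) + μ ((g • F i) ∆ F i) := by
            rw [mul_smul, ← smul_set_symmDiff, measure_smul]
      inv_mem' := fun {g} hg => by
        refine hg.congr fun i => ?_
        rw [← measure_smul μ g⁻¹, smul_set_symmDiff, inv_smul_smul, symmDiff_comm] }
  have hclosure : Subgroup.closure T ≤ H := (Subgroup.closure_le H).2 hgen
  exact ⟨hmeas, hne_zero, hne_top, fun g => hclosure (hT ▸ Subgroup.mem_top g)⟩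

end MeasureTheory.IsFoelner

theorem measure_smul_symmDiff_le {G X : Type*} [Group G] [MulAction G X] [MeasurableSpace X]
    (μ : Measure X) [SMulInvariantMeasure G X μ] {s : G} {A A' : Set X}
    (h : s • A ⊆ A') (h' : s⁻¹ • A ⊆ A') : μ ((s • A) ∆ A) ≤ 2 * μ (A' \ A) := by
  have hsdiff : A \ s • A = s • (s⁻¹ • A \ A) := by rw [smul_set_sdiff, smul_inv_smul]
  calc μ ((s • A) ∆ A) ≤ μ (s • A \ A) + μ (A \ s • A) := measure_union_le _ _
    _ ≤ μ (A' \ A) + μ (A' \ A) := by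
      rw [hsdiff, measure_smul]
      gcongr
    _ = 2 * μ (A' \ A) := (two_mul _).symm

section wordBall

variable {G : Type*} [Group G]

theorem one_mem_wordBall (S : Set G) (t : ℕ) : (1 : G) ∈ wordBall S t :=
  ⟨[], by simp, by simp, rfl⟩

theorem wordBall_mono (S : Set G) : Monotone (wordBall S) :=
  fun _ _ hst _ ⟨l, hl, hlen, hprod⟩ => ⟨l, hl, hlen.trans hst, hprod⟩

theorem smul_wordBall_subset {S : Set G} {s : G} (hs : s ∈ S ∨ s⁻¹ ∈ S) (t : ℕ) :
    s • wordBall S t ⊆ wordBall S (t + 1) := by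
  rintro _ ⟨g, ⟨l, hl, hlen, rfl⟩, rfl⟩
  refine ⟨s :: l, ?_, by simpa using hlen, rfl⟩
  simpa [hs] using hl

theorem wordBall_finite {S : Set G} (hS : S.Finite) (t : ℕ) : (wordBall S t).Finite := by
  let T := {x : G | x ∈ S ∨ x⁻¹ ∈ S}
  have : Finite T := (hS.union hS.inv).subset fun x hx => hx
  refine ((List.finite_length_le T t).image fun l => (l.map (↑)).prod).subset ?_
  rintro _ ⟨l, hl, hlen, rfl⟩
  lift l to List T using hl
  exact ⟨l, by simpa using hlen, rfl⟩

theorem isFoelner_wordBall [MeasurableSpace G] [DiscreteMeasurableSpace G] {S : Set G}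
    (hS : S.Finite) (hgen : Subgroup.closure S = ⊤) {φ : ℕ → ℕ}
    (hφ : Tendsto (fun n => Measure.count (wordBall S (φ n + 1) \ wordBall S (φ n)) /
      Measure.count (wordBall S (φ n))) atTop (𝓝 0)) :
    IsFoelner G Measure.count atTop fun n => wordBall S (φ n) := by
  refine IsFoelner.of_closure_eq_top hgen (.of_forall fun _ => .of_discrete)
    (.of_forall fun _ => Measure.count_ne_zero_iff.2 ⟨1, one_mem_wordBall S _⟩)
    (.of_forall fun _ => (Measure.count_apply_lt_top.2 (wordBall_finite hS _)).ne) fun s hs => ?_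
  have h2 := ENNReal.Tendsto.const_mul (a := 2) hφ (.inr ENNReal.ofNat_ne_top)
  rw [mul_zero] at h2
  refine tendsto_of_tendsto_of_tendsto_of_le_of_le tendsto_const_nhds h2 (fun _ => zero_le)
    fun n => ?_
  rw [← mul_div_assoc]
  gcongr
  exact measure_smul_symmDiff_le _ (smul_wordBall_subset (.inl hs) _)
    (smul_wordBall_subset (.inr (by simpa using hs)) _)

end wordBall

theorem exists_real_invariant_mean {G α : Type*} [SMul G α] {m : Set α → ℝ≥0∞}
    (huniv : m univ = 1) (hadd : ∀ s t, Disjoint s t → m (s ∪ t) = m s + m t)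
    (hinv : ∀ (g : G) s, m (g • s) = m s) :
    ∃ μ : Set α → ℝ, μ univ = 1 ∧ (∀ A, 0 ≤ μ A) ∧
      (∀ A B, Disjoint A B → μ (A ∪ B) = μ A + μ B) ∧ ∀ (g : G) A, μ (g • A) = μ A := by
  have hne_top : ∀ s, m s ≠ ∞ := fun s =>
    ne_top_of_le_ne_top ENNReal.one_ne_top <| by
      rw [← huniv, ← union_compl_self s, hadd _ _ disjoint_compl_right]
      exact le_self_add
  refine ⟨fun A => (m A).toReal, by simp [huniv], fun _ => ENNReal.toReal_nonneg,
    fun A B hAB => ?_, fun g A => congrArg ENNReal.toReal (hinv g A)⟩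
  dsimp only
  rw [hadd A B hAB, ENNReal.toReal_add (hne_top A) (hne_top B)]

/-- Every finitely generated group of subexponential growth is amenable: it
admits a finitely additive left-invariant probability measure on all subsets. -/
theorem amenable_of_subexponential_growth {G : Type*} [Group G] (S : Finset G)
    (hgen : Subgroup.closure (S : Set G) = ⊤)
    (hsub : Tendsto (fun t : ℕ => Real.log ((wordBall (S : Set G) t).ncard) / t)
      atTop (𝓝 0)) :
    ∃ μ : Set G → ℝ, μ Set.univ = 1 ∧ (∀ A, 0 ≤ μ A) ∧
      (∀ A B : Set G, Disjoint A B → μ (A ∪ B) = μ A + μ B) ∧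
      (∀ (g : G) (A : Set G), μ ((g * ·) '' A) = μ A) := by
  let _ : MeasurableSpace G := ⊤
  have _ : DiscreteMeasurableSpace G := ⟨fun _ => trivial⟩
  obtain ⟨φ, hφ⟩ := exists_tendsto_count_sdiff_div_of_tendsto_log_ncard_div
    (wordBall_mono _) (wordBall_finite S.finite_toSet) (fun t => ⟨1, one_mem_wordBall _ t⟩) hsub
  obtain ⟨m, huniv, hadd, hinv⟩ := (isFoelner_wordBall S.finite_toSet hgen hφ).amenable
  exact exists_real_invariant_mean huniv (fun s t => hadd s t .of_discrete) hinv
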